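/- Let X_n be the Class CI Wigner-type ensemble, let a ≠ b in [n], let Δ be a Δ-matrix, let Λ ∈ {A,R}, and write nΔ + Λ(a,b) = [[p₁,q₁],[p₂,q₂]]. Then E[a_n(p₁,q₁)·a_n(p₂,q₂)] = σ² if Δ is one of [[0,0],[0,0]], [[1,1],[1,1]], [[0,1],[0,1]], [[1,0],[1,0]], [[1,0],[0,1]], [[0,1],[1,0]], and E[a_n(p₁,q₁)·a_n(p₂,q₂)] = −σ² if Δ is [[0,0],[1,1]] or [[1,1],[0,0]]; in particular the value does not depend on the choice of Λ. -/

import Mathlib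

open MeasureTheory ProbabilityTheory Matrix

noncomputable section

/-- `blk d a` is index `a` in the first block row/column if `d = 0`, and in the
second block row/column otherwise (encoding `n·d + a` in `[2n]`). -/
def blk {n : ℕ} (d : ℕ) (a : Fin n) : Fin n ⊕ Fin n :=
  if d = 0 then Sum.inl a else Sum.inr a

/-- A Δ-matrix: a `2 × 2` matrix with entries in `{0,1}` whose entries sum to an
even number. -/
def IsDelta (D : Matrix (Fin 2) (Fin 2) ℕ) : Prop :=
  (∀ i j, D i j ≤ 1) ∧ Even (D 0 0 + D 0 1 + D 1 0 + D 1 1)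

/-- The (unnormalized) class CI block matrix built from `X₁, X₂`; its `(p,q)` entry
is `a_n(p,q)`, the `(p,q)` entry of `√(2n)·X_n`. -/
def cIBlock {n : ℕ} (X₁ X₂ : Matrix (Fin n) (Fin n) ℝ) :
    Matrix (Fin n ⊕ Fin n) (Fin n ⊕ Fin n) ℝ :=
  Matrix.fromBlocks X₁ X₂ X₂ (-X₁)

/-- The pair of scalars in position `i ∈ {0,1}` (row) and `j ∈ {0,1}` (column) of
`Λ(a,b)`, where `Λ = A` (aligned, `[[a,b],[a,b]]`) if the Boolean is `true` and
`Λ = R` (reversed, `[[a,b],[b,a]]`) if it is `false`. -/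
def lam {α : Type*} (Λ : Bool) (a b : α) : Fin 2 → Fin 2 → α
  | 0, 0 => a
  | 0, 1 => b
  | 1, 0 => if Λ then a else b
  | 1, 1 => if Λ then b else a

/-! In each listed case the two entries `a_n(p₁,q₁)` and `a_n(p₂,q₂)` are, by the symmetry
of `X₁ⁿ` and `X₂ⁿ`, the same entry `±Xᵢⁿ(a,b)` up to sign: the diagonal blocks carry `X₁ⁿ`
and `-X₁ⁿ`, the off-diagonal ones `X₂ⁿ`. The product is therefore `Xᵢⁿ(a,b)²` or its
negative, whose expectation is `±σ²`. -/

namespace CIBlock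

variable {n : ℕ} {X₁ X₂ : Matrix (Fin n) (Fin n) ℝ}

/-- `a_n(p₁,q₁) · a_n(p₂,q₂)`, where `nΔ + Λ(a,b) = [[p₁,q₁],[p₂,q₂]]`. -/
def deltaProduct (X₁ X₂ : Matrix (Fin n) (Fin n) ℝ) (Λ : Bool) (a b : Fin n)
    (Δ : Matrix (Fin 2) (Fin 2) ℕ) : ℝ :=
  cIBlock X₁ X₂ (blk (Δ 0 0) (lam Λ a b 0 0)) (blk (Δ 0 1) (lam Λ a b 0 1)) *
    cIBlock X₁ X₂ (blk (Δ 1 0) (lam Λ a b 1 0)) (blk (Δ 1 1) (lam Λ a b 1 1))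

theorem deltaProduct_eq_sq (h₁ : X₁.IsSymm) (h₂ : X₂.IsSymm) (Λ : Bool) (a b : Fin n)
    {Δ : Matrix (Fin 2) (Fin 2) ℕ}
    (hΔ : Δ = !![0,0;0,0] ∨ Δ = !![1,1;1,1] ∨ Δ = !![0,1;0,1] ∨ Δ = !![1,0;1,0] ∨
      Δ = !![1,0;0,1] ∨ Δ = !![0,1;1,0]) :
    deltaProduct X₁ X₂ Λ a b Δ = (if Δ 0 0 = Δ 0 1 then X₁ a b else X₂ a b) ^ 2 := by
  rcases hΔ with rfl | rfl | rfl | rfl | rfl | rfl <;> cases Λ <;>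
    simp [deltaProduct, lam, cIBlock, blk, h₁.apply a b, h₂.apply a b, sq]

theorem deltaProduct_eq_neg_sq (h₁ : X₁.IsSymm) (Λ : Bool) (a b : Fin n)
    {Δ : Matrix (Fin 2) (Fin 2) ℕ}
    (hΔ : Δ = !![0,0;1,1] ∨ Δ = !![1,1;0,0]) :
    deltaProduct X₁ X₂ Λ a b Δ = -X₁ a b ^ 2 := by
  rcases hΔ with rfl | rfl <;> cases Λ <;>
    simp [deltaProduct, lam, cIBlock, blk, h₁.apply a b, sq]

end CIBlock

open CIBlock in
theorem stmt10_general
    {Ω : Type*} [MeasurableSpace Ω] (μ : Measure Ω)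
    (σ : ℝ)
    (X : (n : ℕ) → Fin 2 → Ω → Matrix (Fin n) (Fin n) ℝ)
    (hsymm : ∀ n i ω a b, X n i ω b a = X n i ω a b)
    (hvar : ∀ n i (a b : Fin n), ∫ ω, |X n i ω a b| ^ 2 ∂μ = σ ^ 2)
    (n : ℕ) (a b : Fin n) (Λ : Bool)
    (Δ : Matrix (Fin 2) (Fin 2) ℕ) :
    ((Δ = !![0,0;0,0] ∨ Δ = !![1,1;1,1] ∨ Δ = !![0,1;0,1] ∨ Δ = !![1,0;1,0] ∨
        Δ = !![1,0;0,1] ∨ Δ = !![0,1;1,0]) →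
      ∫ ω, cIBlock (X n 0 ω) (X n 1 ω) (blk (Δ 0 0) (lam Λ a b 0 0)) (blk (Δ 0 1) (lam Λ a b 0 1)) *
            cIBlock (X n 0 ω) (X n 1 ω) (blk (Δ 1 0) (lam Λ a b 1 0)) (blk (Δ 1 1) (lam Λ a b 1 1)) ∂μ
        = σ ^ 2) ∧
    ((Δ = !![0,0;1,1] ∨ Δ = !![1,1;0,0]) →
      ∫ ω, cIBlock (X n 0 ω) (X n 1 ω) (blk (Δ 0 0) (lam Λ a b 0 0)) (blk (Δ 0 1) (lam Λ a b 0 1)) *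
            cIBlock (X n 0 ω) (X n 1 ω) (blk (Δ 1 0) (lam Λ a b 1 0)) (blk (Δ 1 1) (lam Λ a b 1 1)) ∂μ
        = -σ ^ 2) := by
  have hsq (i : Fin 2) : ∫ ω, X n i ω a b ^ 2 ∂μ = σ ^ 2 := by simpa only [sq_abs] using hvar n i a b
  have hX (i : Fin 2) (ω : Ω) : (X n i ω).IsSymm := IsSymm.ext (hsymm n i ω)
  change (_ → ∫ ω, deltaProduct (X n 0 ω) (X n 1 ω) Λ a b Δ ∂μ = _) ∧
    (_ → ∫ ω, deltaProduct (X n 0 ω) (X n 1 ω) Λ a b Δ ∂μ = _)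
  refine ⟨fun hΔ => ?_, fun hΔ => ?_⟩
  · simp_rw [deltaProduct_eq_sq (hX 0 _) (hX 1 _) Λ a b hΔ]
    split_ifs
    exacts [hsq 0, hsq 1]
  · simp_rw [deltaProduct_eq_neg_sq (hX 0 _) Λ a b hΔ, integral_neg, hsq 0]

theorem stmt10
    {Ω : Type*} [MeasurableSpace Ω] (μ : Measure Ω) [IsProbabilityMeasure μ]
    (σ : ℝ) (hσ : 0 < σ)
    (X : (n : ℕ) → Fin 2 → Ω → Matrix (Fin n) (Fin n) ℝ)
    (hmeas : ∀ n i a b, Measurable fun ω => X n i ω a b)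
    (hsymm : ∀ n i ω a b, X n i ω b a = X n i ω a b)
    (hindep : ∀ n, iIndepFun
      (fun (v : {v : Fin 2 × Fin n × Fin n // v.2.1 ≤ v.2.2}) ω =>
        X n v.1.1 ω v.1.2.1 v.1.2.2) μ)
    (hcent : ∀ n i a b, ∫ ω, X n i ω a b ∂μ = 0)
    (hvar : ∀ n i (a b : Fin n), ∫ ω, |X n i ω a b| ^ 2 ∂μ = σ ^ 2)
    (hmom : ∀ k : ℕ, ∃ C : ℝ, ∀ n i (a b : Fin n),
      ∫ ω, |X n i ω a b| ^ k ∂μ ≤ C)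
    (n : ℕ) (a b : Fin n) (hab : a ≠ b) (Λ : Bool)
    (Δ : Matrix (Fin 2) (Fin 2) ℕ) (hΔ : IsDelta Δ) :
    ((Δ = !![0,0;0,0] ∨ Δ = !![1,1;1,1] ∨ Δ = !![0,1;0,1] ∨ Δ = !![1,0;1,0] ∨
        Δ = !![1,0;0,1] ∨ Δ = !![0,1;1,0]) →
      ∫ ω, cIBlock (X n 0 ω) (X n 1 ω) (blk (Δ 0 0) (lam Λ a b 0 0)) (blk (Δ 0 1) (lam Λ a b 0 1)) *
            cIBlock (X n 0 ω) (X n 1 ω) (blk (Δ 1 0) (lam Λ a b 1 0)) (blk (Δ 1 1) (lam Λ a b 1 1)) ∂μ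
        = σ ^ 2) ∧
    ((Δ = !![0,0;1,1] ∨ Δ = !![1,1;0,0]) →
      ∫ ω, cIBlock (X n 0 ω) (X n 1 ω) (blk (Δ 0 0) (lam Λ a b 0 0)) (blk (Δ 0 1) (lam Λ a b 0 1)) *
            cIBlock (X n 0 ω) (X n 1 ω) (blk (Δ 1 0) (lam Λ a b 1 0)) (blk (Δ 1 1) (lam Λ a b 1 1)) ∂μ
        = -σ ^ 2) :=
  stmt10_general μ σ X hsymm hvar n a b Λ Δ
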